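/- arXiv:2208.09981 — 2 statements merged into one kernel-verified Lean document; each statement's English description precedes it below -/
import Mathlib

section
/- Let q be a positive integer and m an integer, and set q_m := q / gcd(q, m). Then (1/φ(q)) · Σ_{0 ≤ p ≤ q-1, gcd(p,q)=1} e^{2πi m p / q} = μ(q_m) / φ(q_m), where μ is the Möbius function and φ is Euler's totient function. -/
open Complex Finset Real

lemma full_sum (a : ℤ) (n : ℕ) (hn : 0 < n) :
    ∑ p ∈ Finset.range n, Complex.exp (2 * Real.pi * Complex.I * a * p / n) =
      if (n:ℤ) ∣ a then (n:ℂ) else 0 := by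
  have hn' : (n:ℂ) ≠ 0 := Nat.cast_ne_zero.mpr hn.ne'
  have h2 : (2:ℂ) * Real.pi * Complex.I ≠ 0 := by
    simp [Real.pi_ne_zero, Complex.I_ne_zero, Complex.ofReal_ne_zero]
  have h1 : ∀ p : ℕ, Complex.exp (2 * Real.pi * Complex.I * a * p / n)
      = Complex.exp (2 * Real.pi * Complex.I * a / n) ^ p := by
    intro p
    rw [← Complex.exp_nat_mul]
    ring_nf
  simp only [h1]
  set z := Complex.exp (2 * Real.pi * Complex.I * a / n) with hz
  by_cases hd : (n:ℤ) ∣ a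
  · obtain ⟨k, hk⟩ := hd
    have hzone : z = 1 := by
      rw [hz, hk]
      have : (2:ℂ) * Real.pi * Complex.I * ((n * k : ℤ) : ℂ) / n = k * (2 * Real.pi * Complex.I) := by
        push_cast
        field_simp
      rw [this, Complex.exp_int_mul_two_pi_mul_I]
    rw [if_pos ⟨k, hk⟩]
    simp [hzone]
  · rw [if_neg hd]
    have hz1 : z ≠ 1 := by
      intro h
      rw [hz, Complex.exp_eq_one_iff] at h
      obtain ⟨k, hk⟩ := h
      apply hd
      refine ⟨k, ?_⟩
      have h3 : (2:ℂ) * Real.pi * Complex.I * ((a:ℂ)/n) = 2 * Real.pi * Complex.I * k := by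
        rw [show (2:ℂ) * Real.pi * Complex.I * ((a:ℂ)/n) = 2 * Real.pi * Complex.I * a / n by ring, hk]; ring
      have h4 : (a:ℂ)/n = k := mul_left_cancel₀ h2 h3
      have h5 : (a:ℂ) = n * k := by field_simp at h4; linear_combination h4
      exact_mod_cast h5
    have hzn : z ^ n = 1 := by
      rw [hz, ← Complex.exp_nat_mul]
      have : (n:ℂ) * (2 * Real.pi * Complex.I * a / n) = a * (2 * Real.pi * Complex.I) := by
        field_simp
      rw [this, Complex.exp_int_mul_two_pi_mul_I]
    rw [geom_sum_eq hz1, hzn]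
    simp

lemma ramanujan_decomp (a : ℤ) (n : ℕ) (hn : 0 < n) :
    ∑ d ∈ n.divisors,
        (∑ p ∈ (Finset.range d).filter (fun p => Nat.gcd p d = 1),
          Complex.exp (2 * Real.pi * Complex.I * a * p / d))
      = ∑ p ∈ Finset.range n, Complex.exp (2 * Real.pi * Complex.I * a * p / n) := by
  conv_rhs => rw [← Finset.sum_fiberwise_of_maps_to (g := fun p => n / Nat.gcd n p)
      (t := n.divisors) (fun p _ => Nat.mem_divisors.mpr
        ⟨Nat.div_dvd_of_dvd (Nat.gcd_dvd_left n p), hn.ne'⟩)]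
  refine Finset.sum_congr rfl fun d hd => ?_
  obtain ⟨hdn, -⟩ := Nat.mem_divisors.mp hd
  have hd0 : 0 < d := Nat.pos_of_mem_divisors hd
  set e := n / d with he
  have he0 : 0 < e := Nat.div_pos (Nat.le_of_dvd hn hdn) hd0
  have hde : d * e = n := Nat.mul_div_cancel' hdn
  refine Finset.sum_nbij' (i := fun p' => p' * e) (j := fun p => p / e) ?_ ?_ ?_ ?_ ?_
  · intro p' hp'
    simp only [Finset.mem_filter, Finset.mem_range] at hp' ⊢
    obtain ⟨hp'd, hcop⟩ := hp'
    refine ⟨by rw [← hde]; exact (Nat.mul_lt_mul_right he0).mpr hp'd, ?_⟩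
    rw [← hde, Nat.gcd_mul_right, Nat.gcd_comm d p', hcop, one_mul, hde, he,
      Nat.div_div_self hdn hn.ne']
  · intro p hp
    simp only [Finset.mem_filter, Finset.mem_range] at hp ⊢
    obtain ⟨hpn, hg⟩ := hp
    have hG : Nat.gcd n p = e := by
      rw [he, ← hg, Nat.div_div_self (Nat.gcd_dvd_left n p) hn.ne']
    have hep : e ∣ p := hG ▸ Nat.gcd_dvd_right n p
    constructor
    · rw [Nat.div_lt_iff_lt_mul he0, hde]; exact hpn
    · have h1 : n / e = d := by rw [he, Nat.div_div_self hdn hn.ne']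
      have := Nat.coprime_div_gcd_div_gcd (m := p) (n := n) (by rw [Nat.gcd_comm, hG]; exact he0)
      rw [Nat.gcd_comm p n, hG] at this
      rw [← h1]
      exact this
  · intro p' _
    rw [mul_comm]
    exact Nat.mul_div_cancel_left p' he0
  · intro p hp
    simp only [Finset.mem_filter, Finset.mem_range] at hp
    have hG : Nat.gcd n p = e := by
      rw [he, ← hp.2, Nat.div_div_self (Nat.gcd_dvd_left n p) hn.ne']
    exact Nat.div_mul_cancel (hG ▸ Nat.gcd_dvd_right n p)
  · intro p' hp'
    have hd0' : (d:ℂ) ≠ 0 := Nat.cast_ne_zero.mpr hd0.ne'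
    have he0' : (e:ℂ) ≠ 0 := Nat.cast_ne_zero.mpr he0.ne'
    congr 1
    rw [← hde]
    push_cast
    field_simp

lemma ramanujan_coprime (a : ℤ) (n : ℕ) (hn : 0 < n) (ha : Nat.gcd n a.natAbs = 1) :
    ∑ p ∈ (Finset.range n).filter (fun p => Nat.gcd p n = 1),
        Complex.exp (2 * Real.pi * Complex.I * a * p / n)
      = (ArithmeticFunction.moebius n : ℂ) := by
  have key := (ArithmeticFunction.sum_eq_iff_sum_mul_moebius_eq
    (f := fun d => ∑ p ∈ (Finset.range d).filter (fun p => Nat.gcd p d = 1),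
        Complex.exp (2 * Real.pi * Complex.I * a * p / d))
    (g := fun d => if (d:ℤ) ∣ a then (d:ℂ) else 0)).mp
    (fun k hk => by rw [ramanujan_decomp a k hk, full_sum a k hk]) n hn
  rw [← key]
  rw [Finset.sum_eq_single (n, 1)]
  · simp
  · rintro ⟨x, y⟩ hxy hne
    rw [Nat.mem_divisorsAntidiagonal] at hxy
    have hy1 : y ≠ 1 := by
      rintro rfl
      exact hne (by simp [← hxy.1])
    have : ¬ ((y:ℤ) ∣ a) := by
      intro hdvd
      apply hy1
      have h1 : y ∣ a.natAbs := Int.natCast_dvd_natCast.mp (by rwa [Int.dvd_natAbs])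
      have h2 : y ∣ n := Dvd.intro_left x hxy.1
      have := Nat.dvd_gcd h2 h1
      rwa [ha, Nat.dvd_one] at this
    simp [this]
  · intro h
    exact absurd (Nat.mem_divisorsAntidiagonal.mpr ⟨mul_one n, hn.ne'⟩) h

lemma sum_comp_surj {G H : Type*} [Group G] [Group H] [Fintype G] [Fintype H] [DecidableEq H]
    (f : G →* H) (hf : Function.Surjective f) (c : H → ℂ) :
    ∃ k : ℕ, Fintype.card G = Fintype.card H * k ∧
      ∑ g : G, c (f g) = (k : ℂ) * ∑ y : H, c y := by
  classical
  refine ⟨Nat.card f.ker, ?_, ?_⟩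
  · rw [← Nat.card_eq_fintype_card, ← Nat.card_eq_fintype_card (α := H),
      Subgroup.card_eq_card_quotient_mul_card_subgroup (s := f.ker)]
    congr 1
    exact Nat.card_congr (QuotientGroup.quotientKerEquivOfSurjective f hf).toEquiv
  · have hfib : ∀ y : H, Fintype.card {g : G // f g = y} = Nat.card f.ker := by
      intro y
      rw [← Nat.card_eq_fintype_card]
      refine Nat.card_congr ?_
      refine (Equiv.subtypeEquivRight fun g => ?_).trans
        (MonoidHom.fiberEquivKerOfSurjective hf y)
      simp [Set.mem_preimage]
    rw [← Fintype.sum_fiberwise f (fun g => c (f g))]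
    rw [Finset.mul_sum]
    refine Finset.sum_congr rfl fun y _ => ?_
    have hcy : ∀ g : {g : G // f g = y}, c (f g.1) = c y := fun g => by rw [g.2]
    rw [Fintype.sum_congr _ _ hcy, Finset.sum_const, Finset.card_univ, hfib y, nsmul_eq_mul]

lemma sum_units (n : ℕ) (hn : 0 < n) (c : ℕ → ℂ) :
    haveI : NeZero n := ⟨hn.ne'⟩
    ∑ p ∈ (Finset.range n).filter (fun p => Nat.gcd p n = 1), c p
      = ∑ u : (ZMod n)ˣ, c ((u : ZMod n).val) := by
  haveI : NeZero n := ⟨hn.ne'⟩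
  refine Finset.sum_bij' (i := fun p hp => ZMod.unitOfCoprime p
      (by simpa using (Finset.mem_filter.mp hp).2))
    (j := fun u _ => (u : ZMod n).val) (fun p hp => Finset.mem_univ _) ?_ ?_ ?_ ?_
  · intro u _
    simp only [Finset.mem_filter, Finset.mem_range]
    exact ⟨ZMod.val_lt _, ZMod.val_coe_unit_coprime u⟩
  · intro p hp
    simp only [Finset.mem_filter, Finset.mem_range] at hp
    rw [ZMod.coe_unitOfCoprime, ZMod.val_natCast, Nat.mod_eq_of_lt hp.1]
  · intro u _
    ext
    rw [ZMod.coe_unitOfCoprime, ZMod.natCast_val, ZMod.cast_id]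
  · intro p hp
    simp only [Finset.mem_filter, Finset.mem_range] at hp
    rw [ZMod.coe_unitOfCoprime, ZMod.val_natCast, Nat.mod_eq_of_lt hp.1]

lemma exp_mod (a : ℤ) (n : ℕ) (hn : 0 < n) (p : ℕ) :
    Complex.exp (2 * Real.pi * Complex.I * a * p / n)
      = Complex.exp (2 * Real.pi * Complex.I * a * ((p % n : ℕ) : ℂ) / n) := by
  have hn' : (n:ℂ) ≠ 0 := Nat.cast_ne_zero.mpr hn.ne'
  obtain ⟨r, t, hrt, hr⟩ : ∃ r t, p = r + n * t ∧ r = p % n :=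
    ⟨p % n, p / n, (Nat.mod_add_div p n).symm, rfl⟩
  rw [hrt]
  have hrn : (r + n * t) % n = r := by
    rw [Nat.add_mul_mod_self_left, Nat.mod_eq_of_lt (hr ▸ Nat.mod_lt p hn)]
  rw [hrn]
  have : 2 * Real.pi * Complex.I * a * ((r + n * t : ℕ) : ℂ) / n
      = 2 * Real.pi * Complex.I * a * (r : ℂ) / n
        + ((a * t : ℤ) : ℂ) * (2 * Real.pi * Complex.I) := by
    push_cast
    field_simp
  rw [this, Complex.exp_add, Complex.exp_int_mul_two_pi_mul_I, mul_one]

theorem ramanujan_sum_eval (q : ℕ) (hq : 0 < q) (m : ℤ) :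
    (1 / (Nat.totient q : ℂ)) *
        ∑ p ∈ (Finset.range q).filter (fun p => Nat.gcd p q = 1),
          Complex.exp (2 * Real.pi * Complex.I * m * p / q) =
      (ArithmeticFunction.moebius (q / Nat.gcd q m.natAbs) : ℂ) /
        (Nat.totient (q / Nat.gcd q m.natAbs) : ℂ) := by
  haveI : NeZero q := ⟨hq.ne'⟩
  set g := Nat.gcd q m.natAbs with hgdef
  have hg0 : 0 < g := Nat.gcd_pos_of_pos_left _ hq
  set q' := q / g with hq'def
  have hq'dvd : q' ∣ q := Nat.div_dvd_of_dvd (Nat.gcd_dvd_left q m.natAbs)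
  have hq'0 : 0 < q' := Nat.div_pos (Nat.le_of_dvd hq (Nat.gcd_dvd_left _ _)) hg0
  haveI : NeZero q' := ⟨hq'0.ne'⟩
  have hgq : g * q' = q := Nat.mul_div_cancel' (Nat.gcd_dvd_left q m.natAbs)
  have hgm : (g:ℤ) ∣ m :=
    Int.dvd_natAbs.mp (Int.natCast_dvd_natCast.mpr (Nat.gcd_dvd_right q m.natAbs))
  set m' := m / (g:ℤ) with hm'def
  have hmm : (g:ℤ) * m' = m := Int.mul_ediv_cancel' hgm
  have habs : m.natAbs = g * m'.natAbs := by
    rw [← hmm, Int.natAbs_mul, Int.natAbs_natCast]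
  have hcop : Nat.gcd q' m'.natAbs = 1 := by
    have h1 : m'.natAbs = m.natAbs / g := by rw [habs, Nat.mul_div_cancel_left _ hg0]
    rw [hq'def, h1, hgdef]
    exact Nat.coprime_div_gcd_div_gcd hg0
  -- exponent conversion
  have hgC : (g:ℂ) ≠ 0 := Nat.cast_ne_zero.mpr hg0.ne'
  have hq'C : (q':ℂ) ≠ 0 := Nat.cast_ne_zero.mpr hq'0.ne'
  have hconv : ∀ p : ℕ, Complex.exp (2 * Real.pi * Complex.I * m * p / q)
      = Complex.exp (2 * Real.pi * Complex.I * m' * p / q') := by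
    intro p
    congr 1
    have hqc : (q:ℂ) = g * q' := by exact_mod_cast congrArg (Nat.cast (R := ℂ)) hgq.symm
    have hmc : (m:ℂ) = g * m' := by exact_mod_cast congrArg (Int.cast (R := ℂ)) hmm.symm
    rw [hqc, hmc]
    field_simp
  rw [Finset.sum_congr rfl fun p _ => hconv p]
  -- to units
  rw [sum_units q hq (fun p => Complex.exp (2 * Real.pi * Complex.I * m' * p / q'))]
  -- factor through unitsMap
  have hval : ∀ x : ZMod q, (ZMod.castHom hq'dvd (ZMod q') x).val = x.val % q' := by
    intro x
    rw [ZMod.castHom_apply, ← ZMod.natCast_val, ZMod.val_natCast]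
  have hterm : ∀ u : (ZMod q)ˣ,
      Complex.exp (2 * Real.pi * Complex.I * m' * ((u : ZMod q).val : ℂ) / q')
        = Complex.exp (2 * Real.pi * Complex.I * m'
            * (((ZMod.unitsMap hq'dvd u : (ZMod q')ˣ) : ZMod q').val : ℂ) / q') := by
    intro u
    have h1 : ((ZMod.unitsMap hq'dvd u : (ZMod q')ˣ) : ZMod q').val
        = (u : ZMod q).val % q' := by
      rw [ZMod.unitsMap, Units.coe_map]
      exact hval _
    rw [h1, exp_mod m' q' hq'0]
  rw [Fintype.sum_congr _ _ hterm]
  obtain ⟨k, hcard, hsum⟩ := sum_comp_surj (ZMod.unitsMap hq'dvd)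
    (ZMod.unitsMap_surjective hq'dvd)
    (fun v => Complex.exp (2 * Real.pi * Complex.I * m' * ((v : ZMod q').val : ℂ) / q'))
  rw [hsum]
  -- evaluate inner sum
  have hinner : ∑ v : (ZMod q')ˣ,
      Complex.exp (2 * Real.pi * Complex.I * m' * ((v : ZMod q').val : ℂ) / q')
        = (ArithmeticFunction.moebius q' : ℂ) := by
    rw [← sum_units q' hq'0 (fun p => Complex.exp (2 * Real.pi * Complex.I * m' * p / q'))]
    exact ramanujan_coprime m' q' hq'0 hcop
  rw [hinner]
  -- totient relation
  have htot : q.totient = q'.totient * k := by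
    rw [← ZMod.card_units_eq_totient q, ← ZMod.card_units_eq_totient q']
    exact hcard
  have hk0 : 0 < k := by
    rcases Nat.eq_zero_or_pos k with h | h
    · subst h
      rw [mul_zero] at htot
      exact absurd htot (Nat.totient_pos.mpr hq).ne'
    · exact h
  have ht'0 : (q'.totient : ℂ) ≠ 0 := Nat.cast_ne_zero.mpr (Nat.totient_pos.mpr hq'0).ne'
  have hkC : (k : ℂ) ≠ 0 := Nat.cast_ne_zero.mpr hk0.ne'
  have htC : (q.totient : ℂ) = q'.totient * k := by exact_mod_cast congrArg (Nat.cast (R := ℂ)) htot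
  rw [htC]
  field_simp
end

section
/- For every real t there exist real numbers θ₁, θ₂ and s with s = 2·arcsinh(t/2) such that the unipotent matrix [[1, t], [0, 1]] equals R(θ₁) · diag(e^{s/2}, e^{−s/2}) · R(θ₂), where R(θ) = [[cos θ, −sin θ], [sin θ, cos θ]]. -/
open Matrix Real

theorem unipotent_KAK (t : ℝ) :
    ∃ θ₁ θ₂ : ℝ, ∃ s : ℝ, s = 2 * Real.arsinh (t / 2) ∧
      (!![1, t; 0, 1] : Matrix (Fin 2) (Fin 2) ℝ) =
        !![Real.cos θ₁, -Real.sin θ₁; Real.sin θ₁, Real.cos θ₁] *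
          !![Real.exp (s / 2), 0; 0, Real.exp (-s / 2)] *
          !![Real.cos θ₂, -Real.sin θ₂; Real.sin θ₂, Real.cos θ₂] := by
  set x := t / 2 with hx
  set φ := -Real.arctan x with hφ
  refine ⟨φ / 2 + π / 4, φ / 2 - π / 4, 2 * Real.arsinh x, rfl, ?_⟩
  have hupos : (0:ℝ) < Real.sqrt (1 + x ^ 2) := Real.sqrt_pos.2 (by positivity)
  set u := Real.sqrt (1 + x ^ 2) with hu
  have hu2 : u ^ 2 = 1 + x ^ 2 := Real.sq_sqrt (by positivity)
  have hs2 : 2 * Real.arsinh x / 2 = Real.arsinh x := by ring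
  set a := Real.exp (2 * Real.arsinh x / 2) with hA
  set b := Real.exp (-(2 * Real.arsinh x) / 2) with hB
  have ha : a = x + u := by rw [hA, hs2, Real.exp_arsinh]
  have hb : b = -x + u := by
    rw [hB, show -(2 * Real.arsinh x) / 2 = Real.arsinh (-x) by
      rw [Real.arsinh_neg]; ring, Real.exp_arsinh, hu]
    ring_nf
  set c := Real.cos (φ / 2) with hc
  set d := Real.sin (φ / 2) with hd
  have hcd : c ^ 2 + d ^ 2 = 1 := by
    rw [hc, hd]; exact Real.cos_sq_add_sin_sq _
  have hcosφ : c ^ 2 - d ^ 2 = 1 / u := by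
    have h2 : Real.cos (2 * (φ / 2)) = 1 / u := by
      rw [show 2 * (φ / 2) = φ by ring, hφ, Real.cos_neg, Real.cos_arctan]
    rw [Real.cos_two_mul] at h2
    nlinarith [hcd]
  have hsinφ : 2 * c * d = -x / u := by
    have h2 : Real.sin (2 * (φ / 2)) = -x / u := by
      rw [show 2 * (φ / 2) = φ by ring, hφ, Real.sin_neg, Real.sin_arctan]; ring
    rw [Real.sin_two_mul] at h2
    linarith [h2]
  have hune : u ≠ 0 := ne_of_gt hupos
  have h1 : u * (c ^ 2 - d ^ 2) = 1 := by rw [hcosφ]; field_simp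
  have h2 : u * (2 * c * d) = -x := by rw [hsinφ]; field_simp
  have ht : t = 2 * x := by rw [hx]; ring
  have hc1 : Real.cos (φ / 2 + π / 4) = (c - d) * (Real.sqrt 2 / 2) := by
    rw [Real.cos_add, Real.cos_pi_div_four, Real.sin_pi_div_four]; ring
  have hs1 : Real.sin (φ / 2 + π / 4) = (c + d) * (Real.sqrt 2 / 2) := by
    rw [Real.sin_add, Real.cos_pi_div_four, Real.sin_pi_div_four]; ring
  have hc2 : Real.cos (φ / 2 - π / 4) = (c + d) * (Real.sqrt 2 / 2) := by
    rw [Real.cos_sub, Real.cos_pi_div_four, Real.sin_pi_div_four]; ring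
  have hs2' : Real.sin (φ / 2 - π / 4) = (d - c) * (Real.sqrt 2 / 2) := by
    rw [Real.sin_sub, Real.cos_pi_div_four, Real.sin_pi_div_four]; ring
  have hr2 : Real.sqrt 2 ^ 2 = 2 := Real.sq_sqrt (by norm_num)
  set r := Real.sqrt 2 with hr
  ext i j
  fin_cases i <;> fin_cases j <;>
    simp [Matrix.mul_apply, Fin.sum_univ_succ, hc1, hs1, hc2, hs2', ha, hb, ht]
  · linear_combination (-1 : ℝ) * h1 - (u * (c ^ 2 - d ^ 2) / 2) * hr2
  · linear_combination -x * hcd + h2 - ((x * (c ^ 2 + d ^ 2) - 2 * c * d * u) / 2) * hr2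
  · linear_combination -x * hcd - h2 - ((x * (c ^ 2 + d ^ 2) + 2 * c * d * u) / 2) * hr2
  · linear_combination (-1 : ℝ) * h1 - (u * (c ^ 2 - d ^ 2) / 2) * hr2
end
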